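/- For every integer k ≥ 0 and all real numbers x₁, x₂ with 0 < x₂ ≤ x₁, the integral R_k(x₁,x₂) = ∫₀¹ (x₂ + t(x₁−x₂))^k / √(t(1−t)) dt equals π·s₂^k·P_k(s₁/s₂), where s₁ = (x₁+x₂)/2, s₂ = √(x₁x₂), and P_k is the k-th Legendre polynomial. -/

import Mathlib

/-!
Substituting `t = (1 - cos θ) / 2` turns the integral into `∫₀^π (s₁ - c cos θ)^k dθ` with
`c = (x₁ - x₂) / 2`. With `α = (√x₁ + √x₂) / 2` and `β = (√x₂ - √x₁) / 2` one has
`s₁ - c cos θ = |α e^{iθ} + β|²`, so the integrand is `|∑ⱼ C(k,j) αʲ βᵏ⁻ʲ e^{ijθ}|²`, and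
orthogonality of the `cos (mθ)` on `[0, π]` gives `π ∑ⱼ C(k,j)² (α²)ʲ (β²)ᵏ⁻ʲ`.
Since `α² = (s₁ + s₂) / 2` and `β² = (s₁ - s₂) / 2`, this is `π s₂ᵏ P_k(s₁ / s₂)` by the
expansion `P_k(x) = ∑ⱼ C(k,j)² ((x + 1) / 2)ʲ ((x - 1) / 2)ᵏ⁻ʲ`, which is Leibniz's rule
applied to `(x - 1)ᵏ (x + 1)ᵏ` in Rodrigues' formula.
-/

open MeasureTheory Set

/-- The `k`-th Legendre polynomial, given by Rodrigues' formula
`P_k(x) = (1/(2^k k!)) dᵏ/dxᵏ (x²−1)^k`. -/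
noncomputable def legendreFun (k : ℕ) (x : ℝ) : ℝ :=
  (1 / ((2 : ℝ) ^ k * (Nat.factorial k : ℝ))) *
    iteratedDeriv k (fun y : ℝ => (y ^ 2 - 1) ^ k) x

open Real

theorem legendreFun_eq_sum (k : ℕ) (x : ℝ) :
    legendreFun k x =
      ∑ j ∈ Finset.range (k + 1),
        (k.choose j : ℝ) ^ 2 * ((x + 1) / 2) ^ j * ((x - 1) / 2) ^ (k - j) := by
  have hderiv (a : ℝ) (i : ℕ) :
      iteratedDeriv i (fun y : ℝ => (y + a) ^ k) x = k.descFactorial i * (x + a) ^ (k - i) := by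
    rw [iteratedDeriv_comp_add_const i (· ^ k) a]
    exact iteratedDeriv_pow k i
  have hfactor : (fun y : ℝ => (y ^ 2 - 1) ^ k) = fun y => (y + -1) ^ k * (y + 1) ^ k := by
    funext y; rw [← mul_pow]; ring
  rw [legendreFun, hfactor, iteratedDeriv_fun_mul (by fun_prop) (by fun_prop), Finset.mul_sum]
  refine Finset.sum_congr rfl fun j hj => ?_
  have hj : j ≤ k := Nat.lt_succ_iff.mp (Finset.mem_range.mp hj)
  have hfac : (k.factorial : ℝ) = k.choose j * j.factorial * (k - j).factorial := by
    exact_mod_cast (Nat.choose_mul_factorial_mul_factorial hj).symm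
  rw [hderiv, hderiv, Nat.sub_sub_self hj, Nat.descFactorial_eq_factorial_mul_choose,
    Nat.descFactorial_eq_factorial_mul_choose, Nat.choose_symm hj, hfac, div_pow, div_pow,
    ← pow_mul_pow_sub (2 : ℝ) hj]
  push_cast
  field_simp
  ring

theorem pow_mul_legendreFun_div (k : ℕ) (a : ℝ) {s : ℝ} (hs : s ≠ 0) :
    s ^ k * legendreFun k (a / s) =
      ∑ j ∈ Finset.range (k + 1),
        (k.choose j : ℝ) ^ 2 * ((a + s) / 2) ^ j * ((a - s) / 2) ^ (k - j) := by
  rw [legendreFun_eq_sum, Finset.mul_sum]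
  refine Finset.sum_congr rfl fun j hj => ?_
  have hj : j ≤ k := Nat.lt_succ_iff.mp (Finset.mem_range.mp hj)
  have hadd : (a + s) / 2 = s * ((a / s + 1) / 2) := by field_simp
  have hsub : (a - s) / 2 = s * ((a / s - 1) / 2) := by field_simp
  rw [hadd, hsub, mul_pow, mul_pow, ← pow_mul_pow_sub s hj]
  ring

theorem integral_cos_int_mul (m : ℤ) :
    ∫ θ in (0 : ℝ)..π, cos (m * θ) = if m = 0 then π else 0 := by
  split_ifs with hm
  · simp [hm]
  · rw [intervalIntegral.integral_comp_mul_left (fun θ => cos θ) (by exact_mod_cast hm),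
      integral_cos, sin_int_mul_pi]
    simp

section

open Complex ComplexConjugate

theorem normSq_sum_mul_exp (a : ℕ → ℝ) (n : ℕ) (θ : ℝ) :
    normSq (∑ j ∈ Finset.range n, (a j : ℂ) * exp (j * θ * I)) =
      ∑ j ∈ Finset.range n, ∑ l ∈ Finset.range n,
        a j * a l * Real.cos (((j : ℤ) - l : ℤ) * θ) := by
  have hterm (j l : ℕ) : (a j : ℂ) * exp (j * θ * I) * conj ((a l : ℂ) * exp (l * θ * I)) =
      (a j * a l : ℝ) * exp (((((j : ℤ) - l : ℤ) * θ : ℝ)) * I) := by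
    rw [map_mul, conj_ofReal, ← Complex.exp_conj, mul_mul_mul_comm, ← Complex.exp_add]
    simp only [map_mul, conj_ofReal, conj_natCast, conj_I]
    push_cast
    ring_nf
  rw [← ofReal_re (normSq _), ← mul_conj, map_sum, Finset.sum_mul_sum, re_sum]
  simp only [hterm, re_sum, re_ofReal_mul, exp_ofReal_mul_I_re]

-- Parseval on a half period: with real coefficients the integrand is a cosine polynomial.
theorem integral_normSq_sum_mul_exp (a : ℕ → ℝ) (n : ℕ) :
    ∫ θ in (0 : ℝ)..π, normSq (∑ j ∈ Finset.range n, (a j : ℂ) * exp (j * θ * I)) =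
      π * ∑ j ∈ Finset.range n, a j ^ 2 := by
  simp_rw [normSq_sum_mul_exp]
  have hint (f : ℝ → ℝ) (hf : Continuous f) : IntervalIntegrable f volume 0 π :=
    hf.intervalIntegrable 0 π
  rw [intervalIntegral.integral_finsetSum fun j _ => hint _ (by fun_prop), Finset.mul_sum]
  refine Finset.sum_congr rfl fun j hj => ?_
  rw [intervalIntegral.integral_finsetSum fun l _ => hint _ (by fun_prop)]
  simp only [intervalIntegral.integral_const_mul, integral_cos_int_mul, sub_eq_zero,
    Nat.cast_inj, mul_ite, mul_zero, Finset.sum_ite_eq, if_pos hj]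
  ring

theorem normSq_mul_exp_add (α β θ : ℝ) :
    normSq (α * exp (θ * I) + β) = α ^ 2 + β ^ 2 + 2 * α * β * Real.cos θ := by
  have hsplit :
      (α : ℂ) * exp (θ * I) + β = (α * Real.cos θ + β : ℝ) + (α * Real.sin θ : ℝ) * I := by
    rw [exp_mul_I, ← ofReal_cos, ← ofReal_sin]
    push_cast
    ring
  rw [hsplit, normSq_add_mul_I]
  linear_combination α ^ 2 * Real.sin_sq_add_cos_sq θ

theorem mul_exp_add_pow (α β θ : ℝ) (k : ℕ) :
    ((α : ℂ) * exp (θ * I) + β) ^ k =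
      ∑ j ∈ Finset.range (k + 1),
        ((k.choose j * α ^ j * β ^ (k - j) : ℝ) : ℂ) * exp (j * θ * I) := by
  rw [add_pow]
  refine Finset.sum_congr rfl fun j _ => ?_
  rw [mul_pow, ← Complex.exp_nat_mul]
  push_cast
  ring_nf

end

theorem image_one_sub_cos_div_two_Ioo :
    (fun θ => (1 - cos θ) / 2) '' Ioo 0 π = Ioo (0 : ℝ) 1 := by
  have h : cos '' Ioo 0 π = Ioo (-1) 1 := cosPartialHomeomorph.image_source_eq_target
  rw [show (fun θ => (1 - cos θ) / 2) = (fun u : ℝ => (1 - u) / 2) ∘ cos from rfl, image_comp, h]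
  ext t
  simp only [mem_image, mem_Ioo]
  constructor
  · rintro ⟨u, ⟨hu₁, hu₂⟩, rfl⟩; constructor <;> linarith
  · rintro ⟨ht₀, ht₁⟩; exact ⟨1 - 2 * t, ⟨by linarith, by linarith⟩, by ring⟩

theorem setIntegral_Ioo_div_sqrt_mul_one_sub (g : ℝ → ℝ) :
    ∫ t in Ioo (0 : ℝ) 1, g t / √(t * (1 - t)) = ∫ θ in (0 : ℝ)..π, g ((1 - cos θ) / 2) := by
  have hderiv (θ : ℝ) : HasDerivAt (fun θ => (1 - cos θ) / 2) (sin θ / 2) θ := by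
    simpa using ((hasDerivAt_cos θ).const_sub 1).div_const 2
  have hinj : InjOn (fun θ => (1 - cos θ) / 2) (Ioo 0 π) := fun a ha b hb hab =>
    injOn_cos ⟨ha.1.le, ha.2.le⟩ ⟨hb.1.le, hb.2.le⟩ (by simpa using hab)
  rw [← image_one_sub_cos_div_two_Ioo, integral_image_eq_integral_abs_deriv_smul measurableSet_Ioo
    (fun θ _ => (hderiv θ).hasDerivWithinAt) hinj, intervalIntegral.integral_of_le pi_pos.le,
    integral_Ioc_eq_integral_Ioo]
  refine setIntegral_congr_fun measurableSet_Ioo fun θ hθ => ?_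
  have hsin : 0 < sin θ / 2 := half_pos (sin_pos_of_pos_of_lt_pi hθ.1 hθ.2)
  have hsq : (1 - cos θ) / 2 * (1 - (1 - cos θ) / 2) = (sin θ / 2) ^ 2 := by
    linear_combination (-1 / 4 : ℝ) * sin_sq_add_cos_sq θ
  rw [smul_eq_mul, hsq, sqrt_sq hsin.le, abs_of_pos hsin, mul_div_cancel₀ _ hsin.ne']

/-- `∫₀¹ (x₂+t(x₁−x₂))^k/√(t(1−t)) dt = π s₂^k P_k(s₁/s₂)` with
`s₁ = (x₁+x₂)/2`, `s₂ = √(x₁x₂)`. -/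
theorem stmt_8 (k : ℕ) (x₁ x₂ : ℝ) (h0 : 0 < x₂) (h12 : x₂ ≤ x₁) :
    ∫ t in Ioo (0 : ℝ) 1, (x₂ + t * (x₁ - x₂)) ^ k / Real.sqrt (t * (1 - t)) =
      Real.pi * Real.sqrt (x₁ * x₂) ^ k *
        legendreFun k (((x₁ + x₂) / 2) / Real.sqrt (x₁ * x₂)) := by
  have hx₁ : 0 < x₁ := h0.trans_le h12
  set s := √(x₁ * x₂)
  set α := (√x₁ + √x₂) / 2
  set β := (√x₂ - √x₁) / 2
  have hs : √x₁ * √x₂ = s := (sqrt_mul hx₁.le x₂).symm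
  have hα : α ^ 2 = ((x₁ + x₂) / 2 + s) / 2 := by
    linear_combination (1 / 4 : ℝ) * (sq_sqrt hx₁.le + sq_sqrt h0.le) + hs / 2
  have hβ : β ^ 2 = ((x₁ + x₂) / 2 - s) / 2 := by
    linear_combination (1 / 4 : ℝ) * (sq_sqrt hx₁.le + sq_sqrt h0.le) - hs / 2
  have hintegrand (θ : ℝ) : (x₂ + (1 - cos θ) / 2 * (x₁ - x₂)) ^ k =
      Complex.normSq (∑ j ∈ Finset.range (k + 1),
        ((k.choose j * α ^ j * β ^ (k - j) : ℝ) : ℂ) * Complex.exp (j * θ * Complex.I)) := by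
    rw [← mul_exp_add_pow, map_pow, normSq_mul_exp_add]
    congr 1
    linear_combination (cos θ - 1) / 2 * sq_sqrt hx₁.le - (cos θ + 1) / 2 * sq_sqrt h0.le
  rw [setIntegral_Ioo_div_sqrt_mul_one_sub (fun t => (x₂ + t * (x₁ - x₂)) ^ k)]
  simp_rw [hintegrand]
  rw [integral_normSq_sum_mul_exp, mul_assoc,
    pow_mul_legendreFun_div k _ (sqrt_pos.mpr (mul_pos hx₁ h0)).ne']
  congr 1
  refine Finset.sum_congr rfl fun j _ => ?_
  rw [mul_pow, mul_pow, pow_right_comm α, pow_right_comm β, hα, hβ]
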